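/- Let d ≥ 1 be an integer and let s ≤ 0 ≤ k be real numbers. For a Schwartz function g : ℝ^d → ℂ define ‖g‖_{H^σ}² = ∫_{ℝ^d} (1+|ξ|²)^σ |ĝ(ξ)|² dξ, where ĝ(ξ) = ∫_{ℝ^d} e^{−i x·ξ} g(x) dx. Then there exist constants c > 0 and C > 0 such that for every Schwartz function f and every v ∈ ℝ^d with |v| ≥ 1, the modulated function f_v(x) = e^{−i v·x} f(x) satisfies ‖f_v‖_{H^s} ≥ c |v|^s ‖f‖_{L²} − C |v|^{s−k} ‖f‖_{H^k}. -/

import Mathlib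

/-!
On the Fourier side the modulation `e^{-iv·x}` is a translation by `v`, so
`‖f_v‖²_{H^s} = ∫ (1 + |ξ - v|²)^s |f̂(ξ)|² dξ`. For `|ξ| ≤ |v|/2` the weight is at least
`(2|v|)^{2s}`, while for `|ξ| > |v|/2` one has `1 ≤ ((2/|v|)² (1 + |ξ|²))^k`; hence pointwise
`(1 + |ξ - v|²)^s ≥ (2|v|)^{2s} (1 - (2/|v|)^{2k} (1 + |ξ|²)^k)`. Integrating against `|f̂|²`
and using Plancherel (`‖f̂‖²_{L²} = (2π)^d ‖f‖²_{L²}` in this normalisation) bounds the squares,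
and `a² - b² ≤ S → a - b ≤ √S` takes square roots.
-/

open scoped RealInnerProductSpace

/-- The Fourier transform `ĝ(ξ) = ∫ e^{-i x·ξ} g(x) dx`. -/
noncomputable def fourierT {d : ℕ} (g : EuclideanSpace ℝ (Fin d) → ℂ)
    (ξ : EuclideanSpace ℝ (Fin d)) : ℂ :=
  ∫ x : EuclideanSpace ℝ (Fin d), Complex.exp (-(Complex.I * ((⟪x, ξ⟫ : ℝ) : ℂ))) * g x

/-- The Sobolev norm `‖g‖_{H^σ} = (∫ (1+|ξ|²)^σ |ĝ(ξ)|² dξ)^{1/2}`. -/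
noncomputable def sobolevNorm {d : ℕ} (σ : ℝ) (g : EuclideanSpace ℝ (Fin d) → ℂ) : ℝ :=
  Real.sqrt (∫ ξ : EuclideanSpace ℝ (Fin d), (1 + ‖ξ‖^2) ^ σ * ‖fourierT g ξ‖^2)

/-- The `L²` norm `‖g‖_{L²} = (∫ |g(x)|² dx)^{1/2}`. -/
noncomputable def l2Norm {d : ℕ} (g : EuclideanSpace ℝ (Fin d) → ℂ) : ℝ :=
  Real.sqrt (∫ x : EuclideanSpace ℝ (Fin d), ‖g x‖^2)

open scoped FourierTransform SchwartzMap
open MeasureTheory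

theorem sub_le_sqrt_of_sq_sub_sq_le {a b S : ℝ} (hb : 0 ≤ b) (h : a ^ 2 - b ^ 2 ≤ S) :
    a - b ≤ √S := by
  rcases le_total a b with hab | hab
  · exact (sub_nonpos.2 hab).trans (Real.sqrt_nonneg S)
  · exact Real.le_sqrt_of_sq_le (by nlinarith)

section TranslatedWeight

variable {E : Type*} [NormedAddCommGroup E] {s k : ℝ} {v : E}

theorem mul_one_sub_le_one_add_norm_sub_sq_rpow (hs : s ≤ 0) (hk : 0 ≤ k) (hv : 1 ≤ ‖v‖)
    (ξ : E) :
    ((2 * ‖v‖) ^ s) ^ 2 * (1 - ((2 / ‖v‖) ^ k) ^ 2 * (1 + ‖ξ‖ ^ 2) ^ k) ≤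
      (1 + ‖ξ - v‖ ^ 2) ^ s := by
  have hv0 : 0 < ‖v‖ := one_pos.trans_le hv
  rcases le_or_gt ‖ξ‖ (‖v‖ / 2) with hξ | hξ
  · have hnear : 1 + ‖ξ - v‖ ^ 2 ≤ (2 * ‖v‖) ^ 2 := by
      nlinarith [norm_sub_le ξ v, norm_nonneg (ξ - v)]
    have hβ : 0 ≤ ((2 / ‖v‖) ^ k) ^ 2 * (1 + ‖ξ‖ ^ 2) ^ k := by positivity
    calc ((2 * ‖v‖) ^ s) ^ 2 * (1 - ((2 / ‖v‖) ^ k) ^ 2 * (1 + ‖ξ‖ ^ 2) ^ k)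
        ≤ ((2 * ‖v‖) ^ s) ^ 2 := mul_le_of_le_one_right (sq_nonneg _) (by linarith)
      _ = ((2 * ‖v‖) ^ 2) ^ s := Real.rpow_pow_comm (by positivity) s 2
      _ ≤ (1 + ‖ξ - v‖ ^ 2) ^ s := Real.rpow_le_rpow_of_nonpos (by positivity) hnear hs
  · have hfar : 1 ≤ (2 / ‖v‖) ^ 2 * (1 + ‖ξ‖ ^ 2) := by
      rw [div_pow, div_mul_eq_mul_div, one_le_div (by positivity)]
      nlinarith
    have hβ : 1 ≤ ((2 / ‖v‖) ^ k) ^ 2 * (1 + ‖ξ‖ ^ 2) ^ k := by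
      rw [Real.rpow_pow_comm (by positivity), ← Real.mul_rpow (by positivity) (by positivity)]
      exact Real.one_le_rpow hfar hk
    calc ((2 * ‖v‖) ^ s) ^ 2 * (1 - ((2 / ‖v‖) ^ k) ^ 2 * (1 + ‖ξ‖ ^ 2) ^ k)
        ≤ 0 := mul_nonpos_of_nonneg_of_nonpos (sq_nonneg _) (by linarith)
      _ ≤ (1 + ‖ξ - v‖ ^ 2) ^ s := by positivity

variable [MeasurableSpace E] [OpensMeasurableSpace E] (μ : Measure E) {u : E → ℝ}

theorem mul_sub_le_integral_one_add_norm_sub_sq_rpow_mul (hs : s ≤ 0) (hk : 0 ≤ k)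
    (hv : 1 ≤ ‖v‖) (hu : 0 ≤ u) (hu_int : Integrable u μ)
    (hwu_int : Integrable (fun ξ ↦ (1 + ‖ξ‖ ^ 2) ^ k * u ξ) μ) :
    ((2 * ‖v‖) ^ s) ^ 2 *
        ((∫ ξ, u ξ ∂μ) - ((2 / ‖v‖) ^ k) ^ 2 * ∫ ξ, (1 + ‖ξ‖ ^ 2) ^ k * u ξ ∂μ) ≤
      ∫ ξ, (1 + ‖ξ - v‖ ^ 2) ^ s * u ξ ∂μ := by
  have hweight_int : Integrable (fun ξ ↦ (1 + ‖ξ - v‖ ^ 2) ^ s * u ξ) μ := by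
    have hcont : Continuous fun ξ ↦ (1 + ‖ξ - v‖ ^ 2) ^ s :=
      (by fun_prop : Continuous fun ξ ↦ 1 + ‖ξ - v‖ ^ 2).rpow_const fun _ ↦ .inl (by positivity)
    refine hu_int.bdd_mul (c := 1) hcont.aestronglyMeasurable (.of_forall fun ξ ↦ ?_)
    rw [Real.norm_of_nonneg (by positivity)]
    exact Real.rpow_le_one_of_one_le_of_nonpos (by nlinarith [norm_nonneg (ξ - v)]) hs
  rw [← integral_const_mul, ← integral_sub hu_int (hwu_int.const_mul _),
    ← integral_const_mul]
  refine integral_mono ((hu_int.sub (hwu_int.const_mul _)).const_mul _) hweight_int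
    fun ξ ↦ ?_
  linear_combination
    mul_le_mul_of_nonneg_right (mul_one_sub_le_one_add_norm_sub_sq_rpow hs hk hv ξ) (hu ξ)

theorem mul_sqrt_sub_le_sqrt_integral_one_add_norm_sub_sq_rpow_mul (hs : s ≤ 0) (hk : 0 ≤ k)
    (hv : 1 ≤ ‖v‖) (hu : 0 ≤ u) (hu_int : Integrable u μ)
    (hwu_int : Integrable (fun ξ ↦ (1 + ‖ξ‖ ^ 2) ^ k * u ξ) μ) :
    (2 * ‖v‖) ^ s * √(∫ ξ, u ξ ∂μ) -
        (2 * ‖v‖) ^ s * (2 / ‖v‖) ^ k * √(∫ ξ, (1 + ‖ξ‖ ^ 2) ^ k * u ξ ∂μ) ≤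
      √(∫ ξ, (1 + ‖ξ - v‖ ^ 2) ^ s * u ξ ∂μ) := by
  have hv0 : 0 < ‖v‖ := one_pos.trans_le hv
  refine sub_le_sqrt_of_sq_sub_sq_le (by positivity) ?_
  have hu_nonneg : 0 ≤ ∫ ξ, u ξ ∂μ := integral_nonneg hu
  have hwu_nonneg : 0 ≤ ∫ ξ, (1 + ‖ξ‖ ^ 2) ^ k * u ξ ∂μ :=
    integral_nonneg fun ξ ↦ mul_nonneg (by positivity) (hu ξ)
  rw [mul_pow, mul_pow, mul_pow, Real.sq_sqrt hu_nonneg, Real.sq_sqrt hwu_nonneg]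
  linear_combination mul_sub_le_integral_one_add_norm_sub_sq_rpow_mul μ hs hk hv hu hu_int hwu_int

end TranslatedWeight

theorem SchwartzMap.integrable_one_add_norm_sq_rpow_mul_norm_sq {E F : Type*}
    [NormedAddCommGroup E] [InnerProductSpace ℝ E] [MeasurableSpace E] [BorelSpace E]
    [SecondCountableTopology E] [NormedAddCommGroup F] [NormedSpace ℝ F]
    {μ : Measure E} [μ.HasTemperateGrowth] (g : 𝓢(E, F)) (σ : ℝ) :
    Integrable (fun x ↦ (1 + ‖x‖ ^ 2) ^ σ * ‖g x‖ ^ 2) μ := by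
  have hw := Function.hasTemperateGrowth_one_add_norm_sq_rpow E σ
  have hg_bdd : ∀ᵐ x ∂μ, ‖‖g x‖‖ ≤ SchwartzMap.seminorm ℝ 0 0 g :=
    .of_forall fun x ↦ (norm_norm (g x)).trans_le (g.norm_le_seminorm ℝ x)
  refine ((smulLeftCLM (𝕜 := ℝ) F (fun x : E ↦ (1 + ‖x‖ ^ 2) ^ σ) g).integrable.norm.mul_bdd
    g.continuous.norm.aestronglyMeasurable hg_bdd).congr (.of_forall fun x ↦ ?_)
  dsimp only
  rw [smulLeftCLM_apply_apply hw, norm_smul, Real.norm_of_nonneg (by positivity)]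
  ring

section FourierT

variable {d : ℕ}

theorem fourierT_eq_fourier_inv_smul (g : EuclideanSpace ℝ (Fin d) → ℂ)
    (ξ : EuclideanSpace ℝ (Fin d)) : fourierT g ξ = 𝓕 g ((2 * Real.pi)⁻¹ • ξ) := by
  rw [Real.fourier_eq', fourierT]
  congr 1 with x
  rw [real_inner_smul_right, smul_eq_mul,
    show -2 * Real.pi * ((2 * Real.pi)⁻¹ * ⟪x, ξ⟫) = -⟪x, ξ⟫ by field_simp]
  push_cast
  ring_nf

theorem fourierT_modulate (g : EuclideanSpace ℝ (Fin d) → ℂ) (v ξ : EuclideanSpace ℝ (Fin d)) :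
    fourierT (fun x ↦ Complex.exp (-(Complex.I * ((⟪v, x⟫ : ℝ) : ℂ))) * g x) ξ =
      fourierT g (ξ + v) := by
  unfold fourierT
  congr 1 with x
  rw [← mul_assoc, ← Complex.exp_add, inner_add_right, real_inner_comm v x]
  push_cast
  ring_nf

theorem sobolevNorm_modulate (σ : ℝ) (g : EuclideanSpace ℝ (Fin d) → ℂ)
    (v : EuclideanSpace ℝ (Fin d)) :
    sobolevNorm σ (fun x ↦ Complex.exp (-(Complex.I * ((⟪v, x⟫ : ℝ) : ℂ))) * g x) =
      √(∫ ξ, (1 + ‖ξ - v‖ ^ 2) ^ σ * ‖fourierT g ξ‖ ^ 2) := by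
  rw [sobolevNorm,
    ← integral_add_right_eq_self (fun ξ ↦ (1 + ‖ξ - v‖ ^ 2) ^ σ * ‖fourierT g ξ‖ ^ 2) v]
  simp only [add_sub_cancel_right, fourierT_modulate]

theorem integral_norm_fourierT_sq (f : 𝓢(EuclideanSpace ℝ (Fin d), ℂ)) :
    ∫ ξ, ‖fourierT f ξ‖ ^ 2 = (2 * Real.pi) ^ d * ∫ x, ‖f x‖ ^ 2 := by
  simp_rw [fourierT_eq_fourier_inv_smul, ← SchwartzMap.fourier_coe]
  rw [Measure.integral_comp_inv_smul_of_nonneg volume (fun η ↦ ‖𝓕 f η‖ ^ 2) (by positivity),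
    SchwartzMap.integral_norm_sq_fourier, finrank_euclideanSpace_fin, smul_eq_mul]

theorem integrable_one_add_norm_sq_rpow_mul_norm_fourierT_sq
    (f : 𝓢(EuclideanSpace ℝ (Fin d), ℂ)) (σ : ℝ) :
    Integrable fun ξ : EuclideanSpace ℝ (Fin d) ↦ (1 + ‖ξ‖ ^ 2) ^ σ * ‖fourierT f ξ‖ ^ 2 := by
  have hscale : (2 * Real.pi)⁻¹ ≠ 0 := by positivity
  have hF : fourierT f = SchwartzMap.compCLMOfContinuousLinearEquiv ℂ
      (ContinuousLinearEquiv.smulLeft (Units.mk0 _ hscale)) (𝓕 f) := by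
    ext ξ
    rw [SchwartzMap.compCLMOfContinuousLinearEquiv_apply, Function.comp_apply,
      fourierT_eq_fourier_inv_smul, SchwartzMap.fourier_coe]
    rfl
  rw [hF]
  exact SchwartzMap.integrable_one_add_norm_sq_rpow_mul_norm_sq _ σ

end FourierT

theorem modulated_sobolev_lower_bound_general
    (d : ℕ) (s k : ℝ) (hs : s ≤ 0) (hk : 0 ≤ k) :
    ∃ c C : ℝ, 0 < c ∧ 0 < C ∧
      ∀ (f : SchwartzMap (EuclideanSpace ℝ (Fin d)) ℂ) (v : EuclideanSpace ℝ (Fin d)),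
        1 ≤ ‖v‖ →
        c * ‖v‖ ^ s * l2Norm (fun x => f x) - C * ‖v‖ ^ (s - k) * sobolevNorm k (fun x => f x)
          ≤ sobolevNorm s (fun x => Complex.exp (-(Complex.I * ((⟪v, x⟫ : ℝ) : ℂ))) * f x) := by
  refine ⟨2 ^ s * √((2 * Real.pi) ^ d), 2 ^ s * 2 ^ k, by positivity, by positivity,
    fun f v hv ↦ ?_⟩
  have hv0 : 0 < ‖v‖ := one_pos.trans_le hv
  have hc : 2 ^ s * √((2 * Real.pi) ^ d) * ‖v‖ ^ s * l2Norm (fun x ↦ f x) =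
      (2 * ‖v‖) ^ s * √(∫ ξ, ‖fourierT f ξ‖ ^ 2) := by
    rw [integral_norm_fourierT_sq, Real.sqrt_mul (by positivity),
      Real.mul_rpow zero_le_two hv0.le, l2Norm]
    ring
  have hC : 2 ^ s * 2 ^ k * ‖v‖ ^ (s - k) = (2 * ‖v‖) ^ s * (2 / ‖v‖) ^ k := by
    rw [Real.mul_rpow zero_le_two hv0.le, Real.div_rpow zero_le_two hv0.le,
      Real.rpow_sub hv0]
    ring
  rw [hc, hC, sobolevNorm_modulate, sobolevNorm]
  exact mul_sqrt_sub_le_sqrt_integral_one_add_norm_sub_sq_rpow_mul volume hs hk hv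
    (u := fun ξ ↦ ‖fourierT f ξ‖ ^ 2) (fun _ ↦ by positivity)
    (by simpa using integrable_one_add_norm_sq_rpow_mul_norm_fourierT_sq f 0)
    (integrable_one_add_norm_sq_rpow_mul_norm_fourierT_sq f k)

theorem modulated_sobolev_lower_bound
    (d : ℕ) (hd : 1 ≤ d) (s k : ℝ) (hs : s ≤ 0) (hk : 0 ≤ k) :
    ∃ c C : ℝ, 0 < c ∧ 0 < C ∧
      ∀ (f : SchwartzMap (EuclideanSpace ℝ (Fin d)) ℂ) (v : EuclideanSpace ℝ (Fin d)),
        1 ≤ ‖v‖ →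
        c * ‖v‖ ^ s * l2Norm (fun x => f x) - C * ‖v‖ ^ (s - k) * sobolevNorm k (fun x => f x)
          ≤ sobolevNorm s (fun x => Complex.exp (-(Complex.I * ((⟪v, x⟫ : ℝ) : ℂ))) * f x) :=
  modulated_sobolev_lower_bound_general d s k hs hk
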